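/- arXiv:1706.02854 — 5 statements merged into one kernel-verified Lean document; each statement's English description precedes it below -/
import Mathlib

section
/- Soundness of the axiom system K(A_m): for every ℒ_Am□-formula φ, if φ is derivable in K(A_m) then φ is K(A)-valid. -/
/-!
Since `→` is evaluated as subtraction, `0̄` as `0` and `nφ` as `n · V(φ)`, the propositional
axioms evaluate to `0`, and so does `D_n` because the infimum commutes with multiplication by
`n ≥ 0`. The rules `mp` and `con_n` preserve nonnegativity, and `nec` does because an infimum of
nonnegative reals is nonnegative. Axiom `K` is superadditivity of the infimum
over the successors of a world. Values of formulas are bounded, so these infima are honest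
infima of bounded sets, and at worlds without successors every boxed formula has value `0`.
-/

/-- Formulas of the modal-multiplicative language ℒ_Am□ : variables, → (`imp`)
and □ (`box`). -/
inductive FormM : Type
  | var : ℕ → FormM
  | imp : FormM → FormM → FormM
  | box : FormM → FormM
  deriving DecidableEq

/-- The defined constant `0̄ := p₀ → p₀` (with `p₀` the variable of index 0). -/
def zeroM : FormM := .imp (.var 0) (.var 0)

/-- The defined negation `¬φ := φ → 0̄`. -/
def negM (φ : FormM) : FormM := .imp φ zeroM

/-- The defined connective `φ & ψ := ¬φ → ψ`. -/
def conjM (φ ψ : FormM) : FormM := .imp (negM φ) ψ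

/-- The iterated conjunctions: `0φ := 0̄` and `(n+1)φ := φ & (nφ)`. -/
def iterM : ℕ → FormM → FormM
  | 0, _ => zeroM
  | n + 1, φ => conjM φ (iterM n φ)

/-- A K(A)-model: a nonempty set of worlds, an accessibility relation, and a
valuation of the variables bounded by some `r ≥ 0`. -/
structure KAModel where
  World : Type
  ne : Nonempty World
  R : World → World → Prop
  V : ℕ → World → ℝ
  r : ℝ
  hr : 0 ≤ r
  hV : ∀ p x, V p x ∈ Set.Icc (-r) r

/-- The valuation extended to all ℒ_Am□-formulas.  Note that `sInf ∅ = 0` in `ℝ`,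
matching the convention that the infimum of the empty set is `0`. -/
noncomputable def KAModel.val (M : KAModel) : FormM → M.World → ℝ
  | .var p, x => M.V p x
  | .imp φ ψ, x => M.val ψ x - M.val φ x
  | .box φ, x => sInf {v : ℝ | ∃ y, M.R x y ∧ M.val φ y = v}

/-- K(A)-validity of an ℒ_Am□-formula. -/
def KAValid (φ : FormM) : Prop := ∀ (M : KAModel) (x : M.World), 0 ≤ M.val φ x

/-- The axiom system K(A_m). -/
inductive KAm : FormM → Prop
  | axB (φ ψ χ : FormM) : KAm (.imp (.imp φ ψ) (.imp (.imp ψ χ) (.imp φ χ)))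
  | axC (φ ψ χ : FormM) : KAm (.imp (.imp φ (.imp ψ χ)) (.imp ψ (.imp φ χ)))
  | axI (φ : FormM) : KAm (.imp φ φ)
  | axA (φ ψ : FormM) : KAm (.imp (.imp (.imp φ ψ) ψ) φ)
  | axK (φ ψ : FormM) : KAm (.imp (.box (.imp φ ψ)) (.imp (.box φ) (.box ψ)))
  | axD (n : ℕ) (φ : FormM) : 2 ≤ n → KAm (.imp (.box (iterM n φ)) (iterM n (.box φ)))
  | mp {φ ψ : FormM} : KAm φ → KAm (.imp φ ψ) → KAm ψ
  | nec {φ : FormM} : KAm φ → KAm (.box φ)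
  | con (n : ℕ) {φ : FormM} : 2 ≤ n → KAm (iterM n φ) → KAm φ

lemma sInf_image_add_le {α : Type*} {f g : α → ℝ} {s : Set α}
    (hf : BddBelow (f '' s)) (hg : BddBelow (g '' s)) :
    sInf (f '' s) + sInf (g '' s) ≤ sInf ((fun a => f a + g a) '' s) := by
  rcases s.eq_empty_or_nonempty with rfl | hs
  · simp
  · refine le_csInf (hs.image _) ?_
    rintro _ ⟨a, ha, rfl⟩
    exact add_le_add (csInf_le hf ⟨a, ha, rfl⟩) (csInf_le hg ⟨a, ha, rfl⟩)

lemma sInf_image_const_mul {α : Type*} {c : ℝ} (hc : 0 ≤ c) (f : α → ℝ) (s : Set α) :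
    sInf ((fun a => c * f a) '' s) = c * sInf (f '' s) := by
  rw [← Set.image_image (c * ·), ← smul_eq_mul, ← Real.sInf_smul_of_nonneg hc]
  rfl

lemma abs_sInf_le {s : Set ℝ} {C : ℝ} (hC : 0 ≤ C) (hs : ∀ v ∈ s, |v| ≤ C) :
    |sInf s| ≤ C := by
  rcases s.eq_empty_or_nonempty with rfl | ⟨v, hv⟩
  · simpa using hC
  · have hbdd : BddBelow s := ⟨-C, fun w hw => (abs_le.1 (hs w hw)).1⟩
    exact abs_le.2 ⟨Real.le_sInf (fun w hw => (abs_le.1 (hs w hw)).1) (by linarith),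
      (csInf_le hbdd hv).trans (le_of_abs_le (hs v hv))⟩

namespace KAModel

variable (M : KAModel)

@[simp] lemma val_imp (φ ψ : FormM) (x : M.World) :
    M.val (.imp φ ψ) x = M.val ψ x - M.val φ x := rfl

lemma val_box (φ : FormM) (x : M.World) :
    M.val (.box φ) x = sInf (M.val φ '' {y | M.R x y}) := rfl

@[simp] lemma val_zeroM (x : M.World) : M.val zeroM x = 0 := sub_self _

@[simp] lemma val_conjM (φ ψ : FormM) (x : M.World) :
    M.val (conjM φ ψ) x = M.val φ x + M.val ψ x := by
  simp only [conjM, negM, val_imp, val_zeroM]; ring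

lemma val_iterM (n : ℕ) (φ : FormM) (x : M.World) :
    M.val (iterM n φ) x = n * M.val φ x := by
  induction n with
  | zero => simp [iterM]
  | succ n ih => simp only [iterM, val_conjM, ih]; push_cast; ring

lemma exists_abs_val_le (φ : FormM) : ∃ C, 0 ≤ C ∧ ∀ x, |M.val φ x| ≤ C := by
  induction φ with
  | var p => exact ⟨M.r, M.hr, fun x => abs_le.2 (M.hV p x)⟩
  | imp φ ψ ihφ ihψ =>
    obtain ⟨C, hC, hφ⟩ := ihφ
    obtain ⟨D, hD, hψ⟩ := ihψ
    refine ⟨D + C, add_nonneg hD hC, fun x => ?_⟩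
    exact (abs_sub _ _).trans (add_le_add (hψ x) (hφ x))
  | box φ ih =>
    obtain ⟨C, hC, hφ⟩ := ih
    refine ⟨C, hC, fun x => abs_sInf_le hC ?_⟩
    rintro _ ⟨y, -, rfl⟩
    exact hφ y

lemma bddBelow_val_image (φ : FormM) (s : Set M.World) : BddBelow (M.val φ '' s) := by
  obtain ⟨C, -, hC⟩ := M.exists_abs_val_le φ
  exact ⟨-C, by rintro _ ⟨y, -, rfl⟩; exact (abs_le.1 (hC y)).1⟩

lemma val_box_imp_add_val_box_le (φ ψ : FormM) (x : M.World) :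
    M.val (.box (.imp φ ψ)) x + M.val (.box φ) x ≤ M.val (.box ψ) x := by
  simp only [val_box]
  convert sInf_image_add_le (M.bddBelow_val_image _ _) (M.bddBelow_val_image φ _) using 3
  simp

lemma val_box_iterM (n : ℕ) (φ : FormM) (x : M.World) :
    M.val (.box (iterM n φ)) x = n * M.val (.box φ) x := by
  simp only [val_box, val_iterM]
  exact sInf_image_const_mul n.cast_nonneg _ _

end KAModel

/-- Soundness of the axiom system K(A_m): every ℒ_Am□-formula
derivable in K(A_m) is K(A)-valid. -/
theorem stmt_5 (φ : FormM) : KAm φ → KAValid φ := by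
  intro h
  induction h with
  | axB | axC | axI | axA => intro M x; simp only [KAModel.val_imp]; linarith
  | axK φ ψ =>
    intro M x
    simp only [KAModel.val_imp]
    linarith [M.val_box_imp_add_val_box_le φ ψ x]
  | axD n φ => intro M x; simp [KAModel.val_box_iterM, KAModel.val_iterM]
  | mp _ _ ih ihImp => intro M x; exact (ih M x).trans (sub_nonneg.1 (ihImp M x))
  | nec _ ih =>
    intro M x
    exact Real.sInf_nonneg (by rintro _ ⟨y, -, rfl⟩; exact ih M y)
  | con n hn _ ih =>
    intro M x
    have hpos : (0 : ℝ) < n := by exact_mod_cast (two_pos.trans_le hn)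
    exact nonneg_of_mul_nonneg_right (M.val_iterM n _ x ▸ ih M x) hpos
end

section
/- A sequent Γ ⇒ Δ is derivable in the sequent calculus GK(A_m) if and only if its formula interpretation I(Γ ⇒ Δ) is derivable in the axiom system K(A_m). -/
/-- A sequent: an ordered pair of finite multisets of ℒ_Am□-formulas. -/
abbrev SeqM := Multiset FormM × Multiset FormM

/-- The sequent calculus GK(A_m). -/
inductive GKAm : SeqM → Prop
  | id (Δ : Multiset FormM) : GKAm (Δ, Δ)
  | cut {Γ Δ Θ Λ : Multiset FormM} {φ : FormM} :
      GKAm (Γ + {φ}, Δ) → GKAm (Θ, {φ} + Λ) → GKAm (Γ + Θ, Λ + Δ)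
  | mix {Γ Δ Θ Λ : Multiset FormM} :
      GKAm (Γ, Δ) → GKAm (Θ, Λ) → GKAm (Γ + Θ, Λ + Δ)
  | sc {Γ Δ : Multiset FormM} (n : ℕ) : 2 ≤ n →
      GKAm (n • Γ, n • Δ) → GKAm (Γ, Δ)
  | impL {Γ Δ : Multiset FormM} {φ ψ : FormM} :
      GKAm (Γ + {ψ}, {φ} + Δ) → GKAm (Γ + {FormM.imp φ ψ}, Δ)
  | impR {Γ Δ : Multiset FormM} {φ ψ : FormM} :
      GKAm (Γ + {φ}, {ψ} + Δ) → GKAm (Γ, {FormM.imp φ ψ} + Δ)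
  | boxn {Γ : Multiset FormM} {φ : FormM} (n : ℕ) :
      GKAm (Γ, n • ({φ} : Multiset FormM)) →
      GKAm (Γ.map FormM.box, n • ({FormM.box φ} : Multiset FormM))

/-- `bigConj [φ₁, …, φₙ] = φ₁ & … & φₙ`, with the empty list interpreted as 0̄. -/
def bigConj : List FormM → FormM
  | [] => zeroM
  | [φ] => φ
  | φ :: ψ :: rest => conjM φ (bigConj (ψ :: rest))

/-- The formula interpretation `I(Γ ⇒ Δ) := (&Γ) → (&Δ)` of a sequent. -/
def interp (Γ Δ : List FormM) : FormM := .imp (bigConj Γ) (bigConj Δ)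

/-!
Soundness: formulas modulo provable equivalence form a partially ordered abelian group
(the Lindenbaum algebra) in which `&` is addition, `¬` negation, `0̄` zero and `φ → ψ` is
`ψ - φ`, and the theorems of K(A_m) are exactly the nonnegative elements; rule con_n says that
this group is unperforated. The box induces a monotone operator with `□x + □y ≤ □(x + y)`
and `□(n • x) ≤ n • □x`. Each rule of GK(A_m) preserves `∑ Γ ≤ ∑ Δ`.

Completeness: every axiom and rule of K(A_m) is derivable in GK(A_m). MIX followed by cancelling
the common formulas on both sides (via ID, the `→` rules and CUT) cuts on a whole multiset, which
moves between `Γ ⇒ Δ` and `&Γ ⇒ &Δ`.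
-/

open FormM

namespace KAm

theorem imp_trans {a b c : FormM} (h₁ : KAm (imp a b)) (h₂ : KAm (imp b c)) :
    KAm (imp a c) :=
  mp h₂ (mp h₁ (axB a b c))

theorem imp_comm {a b c : FormM} (h : KAm (imp a (imp b c))) : KAm (imp b (imp a c)) :=
  mp h (axC a b c)

theorem imp_imp_left {a b : FormM} (c : FormM) (h : KAm (imp a b)) :
    KAm (imp (imp b c) (imp a c)) :=
  mp h (axB a b c)

theorem imp_imp_right {c d : FormM} (b : FormM) (h : KAm (imp c d)) :
    KAm (imp (imp b c) (imp b d)) :=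
  mp h (imp_comm (axB b c d))

end KAm

def ProvEquiv (a b : FormM) : Prop := KAm (imp a b) ∧ KAm (imp b a)

namespace ProvEquiv

theorem refl (a : FormM) : ProvEquiv a a := ⟨KAm.axI a, KAm.axI a⟩

theorem symm {a b : FormM} (h : ProvEquiv a b) : ProvEquiv b a := ⟨h.2, h.1⟩

theorem trans {a b c : FormM} (h₁ : ProvEquiv a b) (h₂ : ProvEquiv b c) : ProvEquiv a c :=
  ⟨KAm.imp_trans h₁.1 h₂.1, KAm.imp_trans h₂.2 h₁.2⟩

theorem imp {a b c d : FormM} (h₁ : ProvEquiv a b) (h₂ : ProvEquiv c d) :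
    ProvEquiv (.imp a c) (.imp b d) :=
  ⟨KAm.imp_trans (KAm.imp_imp_left c h₁.2) (KAm.imp_imp_right b h₂.1),
   KAm.imp_trans (KAm.imp_imp_left d h₁.1) (KAm.imp_imp_right a h₂.2)⟩

theorem imp_left {a b : FormM} (c : FormM) (h : ProvEquiv a b) :
    ProvEquiv (.imp a c) (.imp b c) :=
  h.imp (refl c)

theorem imp_right {c d : FormM} (a : FormM) (h : ProvEquiv c d) :
    ProvEquiv (.imp a c) (.imp a d) :=
  (refl a).imp h

theorem box {a b : FormM} (h : ProvEquiv a b) : ProvEquiv (box a) (box b) :=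
  ⟨KAm.mp (KAm.nec h.1) (KAm.axK a b), KAm.mp (KAm.nec h.2) (KAm.axK b a)⟩

theorem kam_iff {a b : FormM} (h : ProvEquiv a b) : KAm a ↔ KAm b :=
  ⟨fun ha => KAm.mp ha h.1, fun hb => KAm.mp hb h.2⟩

theorem imp_imp_self (a b : FormM) : ProvEquiv a (.imp (.imp a b) b) :=
  ⟨KAm.imp_comm (KAm.axI (.imp a b)), KAm.axA a b⟩

theorem imp_comm (a b c : FormM) : ProvEquiv (.imp a (.imp b c)) (.imp b (.imp a c)) :=
  ⟨KAm.axC a b c, KAm.axC b a c⟩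

theorem imp_self_imp (a b : FormM) : ProvEquiv (.imp (.imp a a) b) b :=
  ((imp_right _ (imp_imp_self b a)).trans
    ((imp_comm _ _ a).trans (imp_right _ (imp_imp_self a a).symm))).trans
    (imp_imp_self b a).symm

theorem zero_imp (b : FormM) : ProvEquiv (.imp zeroM b) b := imp_self_imp (var 0) b

theorem zero_equiv_imp_self (a : FormM) : ProvEquiv zeroM (.imp a a) :=
  ⟨KAm.mp (KAm.axI a) (imp_self_imp (var 0) (.imp a a)).2,
   KAm.mp (KAm.axI (var 0)) (imp_self_imp a zeroM).2⟩

theorem neg_neg (a : FormM) : ProvEquiv (negM (negM a)) a :=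
  (imp_imp_self a zeroM).symm

theorem neg_imp (a b : FormM) : ProvEquiv (negM (.imp a b)) (.imp b a) :=
  ((imp_right _ (zero_equiv_imp_self b)).trans (imp_comm (.imp a b) b b)).trans
    (imp_right b (imp_imp_self a b).symm)

theorem neg_imp_neg (a b : FormM) : ProvEquiv (.imp (negM a) (negM b)) (.imp b a) :=
  (imp_comm (negM a) b zeroM).trans (imp_right b (neg_neg a))

theorem neg_imp_comm (a b : FormM) : ProvEquiv (.imp (negM a) b) (.imp (negM b) a) :=
  (imp_right _ (neg_neg b).symm).trans (neg_imp_neg a (negM b))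

theorem imp_imp_neg_imp (x y c : FormM) :
    ProvEquiv (.imp (.imp x y) c) (.imp (negM x) (.imp y c)) :=
  ((((imp_right _ (neg_neg c).symm).trans (imp_comm (.imp x y) (negM c) zeroM)).trans
    (imp_right _ (neg_imp x y))).trans
    ((imp_comm _ _ _).trans (imp_right y (neg_imp_comm c x)))).trans (imp_comm _ _ _)

end ProvEquiv

instance ProvEquiv.setoid : Setoid FormM where
  r := ProvEquiv
  iseqv := ⟨ProvEquiv.refl, ProvEquiv.symm, ProvEquiv.trans⟩

def Lindenbaum : Type := Quotient ProvEquiv.setoid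

namespace Lindenbaum

def mk : FormM → Lindenbaum := Quotient.mk _

theorem mk_eq_mk {a b : FormM} : mk a = mk b ↔ ProvEquiv a b := Quotient.eq

theorem ind {p : Lindenbaum → Prop} (h : ∀ a, p (mk a)) (x : Lindenbaum) : p x :=
  Quotient.ind h x

instance : Zero Lindenbaum := ⟨mk zeroM⟩

instance : Neg Lindenbaum :=
  ⟨Quotient.map negM fun _ _ h => ProvEquiv.imp_left zeroM h⟩

instance : Add Lindenbaum :=
  ⟨Quotient.map₂ conjM fun _ _ h₁ _ _ h₂ => (h₁.imp_left zeroM).imp h₂⟩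

theorem mk_negM (a : FormM) : mk (negM a) = -mk a := rfl

theorem mk_conjM (a b : FormM) : mk (conjM a b) = mk a + mk b := rfl

instance : AddCommGroup Lindenbaum where
  add_assoc := by
    refine ind fun a => ind fun b => ind fun c => mk_eq_mk.2 ?_
    exact (((ProvEquiv.neg_imp (negM a) b).imp_left c).trans
      (ProvEquiv.imp_imp_neg_imp b (negM a) c)).trans (ProvEquiv.imp_comm _ _ c)
  zero_add := by
    refine ind fun a => mk_eq_mk.2 ?_
    exact (ProvEquiv.neg_imp_comm zeroM a).trans (ProvEquiv.neg_neg a)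
  add_zero := ind fun a => mk_eq_mk.2 (ProvEquiv.neg_neg a)
  add_comm := ind fun a => ind fun b => mk_eq_mk.2 (ProvEquiv.neg_imp_comm a b)
  neg_add_cancel := by
    refine ind fun a => mk_eq_mk.2 ?_
    exact ((ProvEquiv.neg_neg a).imp_left a).trans (ProvEquiv.zero_equiv_imp_self a).symm
  nsmul := nsmulRec
  zsmul := zsmulRec

theorem mk_imp (a b : FormM) : mk (imp a b) = mk b - mk a := by
  rw [sub_eq_add_neg, ← mk_negM, ← mk_conjM]
  exact mk_eq_mk.2 (ProvEquiv.neg_imp_neg b a).symm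

theorem mk_iterM (n : ℕ) (a : FormM) : mk (iterM n a) = n • mk a := by
  induction n with
  | zero => rfl
  | succ n ih => rw [iterM, mk_conjM, ih, succ_nsmul']

theorem mk_bigConj (l : List FormM) : mk (bigConj l) = (l.map mk).sum := by
  induction l using bigConj.induct with
  | case1 => rfl
  | case2 a => simp [bigConj]
  | case3 a b l ih => rw [bigConj, mk_conjM, ih]; simp only [List.map_cons, List.sum_cons]

instance : PartialOrder Lindenbaum where
  le := Quotient.lift₂ (fun a b => KAm (imp a b)) fun _ _ _ _ h₁ h₂ =>
    propext (h₁.imp h₂).kam_iff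
  le_refl := ind fun a => KAm.axI a
  le_trans := ind fun _ => ind fun _ => ind fun _ => KAm.imp_trans
  le_antisymm := ind fun _ => ind fun _ h₁ h₂ => mk_eq_mk.2 ⟨h₁, h₂⟩

theorem mk_le_mk {a b : FormM} : mk a ≤ mk b ↔ KAm (imp a b) := Iff.rfl

instance : IsOrderedAddMonoid Lindenbaum where
  add_le_add_left := ind fun _ => ind fun _ h => ind fun c =>
    KAm.imp_imp_left c (KAm.imp_imp_left zeroM h)

theorem zero_le_mk {a : FormM} : 0 ≤ mk a ↔ KAm a :=
  (ProvEquiv.zero_imp a).kam_iff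

theorem nonneg_of_nsmul_nonneg {n : ℕ} (hn : 2 ≤ n) {x : Lindenbaum} (h : 0 ≤ n • x) :
    0 ≤ x := by
  induction x using ind with
  | h a => exact zero_le_mk.2 (KAm.con n hn (zero_le_mk.1 (mk_iterM n a ▸ h)))

def box : Lindenbaum → Lindenbaum := Quotient.map FormM.box fun _ _ h => h.box

theorem mk_box (a : FormM) : mk (.box a) = box (mk a) := rfl

theorem box_mono : Monotone box :=
  ind fun a => ind fun b h => KAm.mp (KAm.nec h) (KAm.axK a b)

theorem box_sub_le (x y : Lindenbaum) : box (y - x) ≤ box y - box x := by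
  induction x using ind with | h a =>
  induction y using ind with | h b =>
  rw [← mk_imp, ← mk_box, ← mk_box, ← mk_box, ← mk_imp]
  exact mk_le_mk.2 (KAm.axK a b)

theorem box_add_le (x y : Lindenbaum) : box x + box y ≤ box (x + y) := by
  have h := box_sub_le y (x + y)
  rw [add_sub_cancel_right] at h
  exact le_sub_iff_add_le.1 h

theorem box_zero : box 0 = 0 := by
  refine le_antisymm ?_ (zero_le_mk.2 (KAm.nec (KAm.axI (var 0))))
  simpa using box_add_le 0 0

theorem box_nsmul_le (n : ℕ) (x : Lindenbaum) : box (n • x) ≤ n • box x := by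
  induction x using ind with | h a =>
  match n with
  | 0 => simp [box_zero]
  | 1 => simp
  | n + 2 =>
    rw [← mk_iterM, ← mk_box, ← mk_box, ← mk_iterM]
    exact KAm.axD (n + 2) a (by omega)

theorem sum_map_box_le (s : Multiset Lindenbaum) : (s.map box).sum ≤ box s.sum := by
  induction s using Multiset.induction with
  | empty => simp [box_zero]
  | cons x s ih =>
    simp only [Multiset.map_cons, Multiset.sum_cons]
    exact (add_le_add le_rfl ih).trans (box_add_le x s.sum)

end Lindenbaum

open Lindenbaum in
theorem GKAm.sum_le_sum {s : SeqM} (h : GKAm s) :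
    (s.1.map mk).sum ≤ (s.2.map mk).sum := by
  induction h with
  | id => exact le_rfl
  | cut _ _ ih₁ ih₂ | mix _ _ ih₁ ih₂ =>
    simp only [Multiset.map_add, Multiset.sum_add, Multiset.map_singleton,
      Multiset.sum_singleton] at *
    rw [← sub_nonneg] at ih₁ ih₂ ⊢
    convert add_nonneg ih₁ ih₂ using 1
    abel
  | sc n hn _ ih =>
    simp only [Multiset.map_nsmul, Multiset.sum_nsmul] at *
    rw [← sub_nonneg, ← nsmul_sub] at ih
    exact sub_nonneg.1 (nonneg_of_nsmul_nonneg hn ih)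
  | impL _ ih | impR _ ih =>
    simp only [Multiset.map_add, Multiset.sum_add, Multiset.map_singleton,
      Multiset.sum_singleton, mk_imp] at *
    rw [← sub_nonneg] at ih ⊢
    convert ih using 1
    abel
  | boxn n _ ih =>
    simp only [Multiset.map_nsmul, Multiset.sum_nsmul, Multiset.map_singleton,
      Multiset.sum_singleton] at *
    rw [Multiset.map_map, show mk ∘ FormM.box = Lindenbaum.box ∘ mk from rfl,
      ← Multiset.map_map]
    exact (sum_map_box_le _).trans ((box_mono ih).trans (box_nsmul_le n _))

namespace GKAm

variable {Γ Δ Γ' Δ' Θ : Multiset FormM} {a b : FormM}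

theorem of_eq (h : GKAm (Γ, Δ)) (hΓ : Γ = Γ') (hΔ : Δ = Δ') : GKAm (Γ', Δ') :=
  hΓ ▸ hΔ ▸ h

theorem impR_singleton (h : GKAm (Γ + {a}, {b})) : GKAm (Γ, {imp a b}) :=
  (impR (Δ := 0) (h.of_eq rfl (add_zero _).symm)).of_eq rfl (add_zero _)

theorem axI (a : FormM) : GKAm (0, {imp a a}) :=
  impR_singleton ((id {a}).of_eq (zero_add _).symm rfl)

theorem imp_self_left (a : FormM) : GKAm ({imp a a}, 0) :=
  (impL (Γ := 0) (Δ := 0) ((id {a}).of_eq (zero_add _).symm (add_zero _).symm)).of_eq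
    (zero_add _) rfl

theorem zeroM_left : GKAm ({zeroM}, 0) := imp_self_left (var 0)

theorem zeroM_right : GKAm (0, {zeroM}) := axI (var 0)

theorem cancel_singleton (h : GKAm (Γ + {a}, Δ + {a})) : GKAm (Γ, Δ) := by
  have h' : GKAm (Γ, {imp a a} + Δ) := impR (h.of_eq rfl (add_comm _ _))
  exact (cut (Γ := 0) ((imp_self_left a).of_eq (zero_add _).symm rfl) h').of_eq
    (zero_add _) (add_zero _)

theorem cancel (h : GKAm (Γ + Θ, Δ + Θ)) : GKAm (Γ, Δ) := by
  induction Θ using Multiset.induction with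
  | empty => simpa using h
  | cons a Θ ih =>
    refine ih (cancel_singleton (a := a) (h.of_eq ?_ ?_)) <;>
      rw [← Multiset.singleton_add] <;> abel

theorem trans (h₁ : GKAm (Γ, Θ)) (h₂ : GKAm (Θ, Δ)) : GKAm (Γ, Δ) :=
  cancel (mix h₁ h₂)

theorem conjM_left {Δ₁ Δ₂ : Multiset FormM} (h₁ : GKAm ({a}, Δ₁))
    (h₂ : GKAm ({b}, Δ₂)) : GKAm ({conjM a b}, Δ₂ + Δ₁) := by
  have h := mix (mix h₁ h₂) zeroM_right
  have h' : GKAm ({b} + {a}, {zeroM} + (Δ₂ + Δ₁)) := h.of_eq (by abel) (by abel)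
  exact (impL (Γ := 0) ((impR h').of_eq (zero_add _).symm rfl)).of_eq (zero_add _) rfl

theorem conjM_right {Γ₁ Γ₂ : Multiset FormM} (h₁ : GKAm (Γ₁, {a}))
    (h₂ : GKAm (Γ₂, {b})) : GKAm (Γ₁ + Γ₂, {conjM a b}) := by
  have h := mix (mix h₁ h₂) zeroM_left
  have h' : GKAm (Γ₁ + Γ₂ + {zeroM}, {a} + {b}) := h.of_eq (by abel) (by abel)
  exact (impR (Δ := 0) ((impL h').of_eq rfl (add_zero _).symm)).of_eq rfl (add_zero _)

theorem iterM_left (n : ℕ) (a : FormM) : GKAm ({iterM n a}, n • {a}) := by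
  induction n with
  | zero => exact zeroM_left
  | succ n ih => exact (conjM_left (id {a}) ih).of_eq rfl (succ_nsmul _ _).symm

theorem iterM_right (n : ℕ) (a : FormM) : GKAm (n • {a}, {iterM n a}) := by
  induction n with
  | zero => exact zeroM_right
  | succ n ih => exact (conjM_right (id {a}) ih).of_eq (succ_nsmul' _ _).symm rfl

theorem bigConj_left (l : List FormM) : GKAm ({bigConj l}, ↑l) := by
  induction l using bigConj.induct with
  | case1 => exact zeroM_left
  | case2 a => exact id {a}
  | case3 a b l ih =>
    exact (conjM_left (id {a}) ih).of_eq rfl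
      (by rw [add_comm, Multiset.singleton_add, Multiset.cons_coe])

theorem bigConj_right (l : List FormM) : GKAm (↑l, {bigConj l}) := by
  induction l using bigConj.induct with
  | case1 => exact zeroM_right
  | case2 a => exact id {a}
  | case3 a b l ih =>
    exact (conjM_right (id {a}) ih).of_eq
      (by rw [Multiset.singleton_add, Multiset.cons_coe]) rfl

theorem of_impR_singleton (h : GKAm (0, {imp a b})) : GKAm ({a}, {b}) := by
  have modusPonens : GKAm ({a} + {imp a b}, {b}) := impL (id ({a} + {b}))
  exact (cut modusPonens (h.of_eq rfl (add_zero _).symm)).of_eq (add_zero _) (zero_add _)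

theorem axB (a b c : FormM) : GKAm (0, {imp (imp a b) (imp (imp b c) (imp a c))}) := by
  have h₁ : GKAm ({a} + {c} + {b}, {a} + ({b} + {c})) :=
    (id ({a} + {b} + {c})).of_eq (by abel) (by abel)
  have h₂ : GKAm ({imp a b} + {a} + {c}, {b} + {c}) := (impL h₁).of_eq (by abel) rfl
  have h₃ : GKAm (0 + {imp a b} + {imp b c} + {a}, {c}) := (impL h₂).of_eq (by abel) rfl
  exact impR_singleton (impR_singleton (impR_singleton h₃))

theorem axC (a b c : FormM) : GKAm (0, {imp (imp a (imp b c)) (imp b (imp a c))}) := by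
  have h₁ : GKAm ({b} + {a} + {c}, {b} + ({a} + {c})) :=
    (id ({a} + {b} + {c})).of_eq (by abel) (by abel)
  have h₂ : GKAm (0 + {imp a (imp b c)} + {b} + {a}, {c}) :=
    (impL (impL h₁)).of_eq (by abel) rfl
  exact impR_singleton (impR_singleton (impR_singleton h₂))

theorem axA (a b : FormM) : GKAm (0, {imp (imp (imp a b) b) a}) := by
  have h₁ : GKAm (0 + {b} + {a}, {b} + {a}) := (id ({a} + {b})).of_eq (by abel) (by abel)
  exact impR_singleton (impL (impR h₁))

theorem axK (a b : FormM) : GKAm (0, {imp (box (imp a b)) (imp (box a) (box b))}) := by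
  have h₁ : GKAm ({imp a b} + {a}, 1 • {b}) :=
    (impL (id ({a} + {b}))).of_eq (by abel) (one_nsmul _).symm
  have h₂ : GKAm (0 + {box (imp a b)} + {box a}, {box b}) :=
    (boxn 1 h₁).of_eq (by simp) (one_nsmul _)
  exact impR_singleton (impR_singleton h₂)

theorem axD (n : ℕ) (a : FormM) : GKAm (0, {imp (box (iterM n a)) (iterM n (box a))}) := by
  have h : GKAm (0 + {box (iterM n a)}, n • {box a}) :=
    (boxn n (iterM_left n a)).of_eq (by simp) rfl
  exact impR_singleton (h.trans (iterM_right n (box a)))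

theorem of_KAm {φ : FormM} (h : KAm φ) : GKAm (0, {φ}) := by
  induction h with
  | axB a b c => exact axB a b c
  | axC a b c => exact axC a b c
  | axI a => exact axI a
  | axA a b => exact axA a b
  | axK a b => exact axK a b
  | axD n a => exact axD n a
  | mp _ _ ih₁ ih₂ => exact ih₁.trans (of_impR_singleton ih₂)
  | nec _ ih => exact (boxn 1 (ih.of_eq rfl (one_nsmul _).symm)).of_eq rfl (one_nsmul _)
  | con n hn _ ih =>
    exact sc n hn ((ih.trans (iterM_left n _)).of_eq (nsmul_zero n).symm rfl)

end GKAm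

/-- A sequent Γ ⇒ Δ is derivable in GK(A_m) iff its formula
interpretation I(Γ ⇒ Δ) is derivable in the axiom system K(A_m). -/
theorem stmt_6 (Γ Δ : List FormM) :
    GKAm ((↑Γ : Multiset FormM), (↑Δ : Multiset FormM)) ↔ KAm (interp Γ Δ) := by
  constructor
  · intro h
    rw [interp, ← Lindenbaum.zero_le_mk, Lindenbaum.mk_imp, sub_nonneg, Lindenbaum.mk_bigConj,
      Lindenbaum.mk_bigConj]
    simpa using h.sum_le_sum
  · intro h
    have h' : GKAm ({bigConj Γ}, {bigConj Δ}) := GKAm.of_impR_singleton (GKAm.of_KAm h)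
    exact ((GKAm.bigConj_right Γ).trans h').trans (GKAm.bigConj_left Δ)
end

section
/- The rule (□_{k,n}) is GK(A_m)-derivable: for all k ≥ 1, n ≥ 0, finite multisets Γ, Δ, Γ₀, Γ₁, …, Γₙ of ℒ_Am□-formulas with kΓ = Γ₀ ⊎ Γ₁ ⊎ … ⊎ Γₙ, and formulas φ₁, …, φₙ, there is a GK(A_m)-derivation of the sequent Δ, □Γ ⇒ □φ₁, …, □φₙ, Δ from the sequents Γ₀ ⇒ and Γᵢ ⇒ k[φᵢ] (1 ≤ i ≤ n) taken as leaves. -/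
/-- GK(A_m)-derivations from a set `Y` of sequents taken as leaves:
a finite tree of sequents with the given root, each node either a leaf in `Y`
or following from its parents by a rule of GK(A_m). -/
inductive GKAmFrom (Y : Set SeqM) : SeqM → Prop
  | leaf {S : SeqM} : S ∈ Y → GKAmFrom Y S
  | id (Δ : Multiset FormM) : GKAmFrom Y (Δ, Δ)
  | cut {Γ Δ Θ Λ : Multiset FormM} {φ : FormM} :
      GKAmFrom Y (Γ + {φ}, Δ) → GKAmFrom Y (Θ, {φ} + Λ) → GKAmFrom Y (Γ + Θ, Λ + Δ)
  | mix {Γ Δ Θ Λ : Multiset FormM} :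
      GKAmFrom Y (Γ, Δ) → GKAmFrom Y (Θ, Λ) → GKAmFrom Y (Γ + Θ, Λ + Δ)
  | sc {Γ Δ : Multiset FormM} (n : ℕ) : 2 ≤ n →
      GKAmFrom Y (n • Γ, n • Δ) → GKAmFrom Y (Γ, Δ)
  | impL {Γ Δ : Multiset FormM} {φ ψ : FormM} :
      GKAmFrom Y (Γ + {ψ}, {φ} + Δ) → GKAmFrom Y (Γ + {FormM.imp φ ψ}, Δ)
  | impR {Γ Δ : Multiset FormM} {φ ψ : FormM} :
      GKAmFrom Y (Γ + {φ}, {ψ} + Δ) → GKAmFrom Y (Γ, {FormM.imp φ ψ} + Δ)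
  | boxn {Γ : Multiset FormM} {φ : FormM} (n : ℕ) :
      GKAmFrom Y (Γ, n • ({φ} : Multiset FormM)) →
      GKAmFrom Y (Γ.map FormM.box, n • ({FormM.box φ} : Multiset FormM))

/-
The derivation applies `□_0` to `Γ₀ ⇒` and `□_k` to each `Γᵢ ⇒ k[φᵢ]`, and joins the results by
`MIX`. Since boxing commutes with multiset sums, this is the `k`-fold sequent `k(□Γ) ⇒ k[□φ₁, …, □φₙ]`,
and `SC_k` (vacuous for `k = 1`) divides it by `k`. A final `MIX` with `Δ ⇒ Δ` adds the context.
-/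

namespace GKAmFrom

variable {Y : Set SeqM}

theorem of_eq {S T : SeqM} (h : GKAmFrom Y S) (e : S = T) : GKAmFrom Y T := e ▸ h

theorem mix_sum {ι : Type*} (s : Finset ι) (A B : ι → Multiset FormM)
    (h : ∀ i ∈ s, GKAmFrom Y (A i, B i)) : GKAmFrom Y (∑ i ∈ s, A i, ∑ i ∈ s, B i) := by
  induction s using Finset.cons_induction with
  | empty => exact id 0
  | cons a s has ih =>
    refine (mix (h a (Finset.mem_cons_self a s))
      (ih fun i hi => h i (Finset.mem_cons_of_mem hi))).of_eq ?_
    rw [Finset.sum_cons, Finset.sum_cons, add_comm (B a)]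

theorem of_nsmul {k : ℕ} (hk : 1 ≤ k) {Γ Δ : Multiset FormM}
    (h : GKAmFrom Y (k • Γ, k • Δ)) : GKAmFrom Y (Γ, Δ) := by
  rcases hk.eq_or_lt with rfl | hk
  · simpa using h
  · exact sc k hk h

theorem box_zero {Γ : Multiset FormM} (h : GKAmFrom Y (Γ, 0)) :
    GKAmFrom Y (Γ.map FormM.box, 0) := by
  simpa using boxn (φ := zeroM) 0 (by simpa using h)

theorem box_split {ι : Type*} [Fintype ι] {k : ℕ} (hk : 1 ≤ k)
    {Γ Δ Γ₀ : Multiset FormM} {Γs : ι → Multiset FormM} {φs : ι → FormM}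
    (hsplit : k • Γ = Γ₀ + ∑ i, Γs i) (h₀ : GKAmFrom Y (Γ₀, 0))
    (hs : ∀ i, GKAmFrom Y (Γs i, k • ({φs i} : Multiset FormM))) :
    GKAmFrom Y (Δ + Γ.map FormM.box, (∑ i, ({FormM.box (φs i)} : Multiset FormM)) + Δ) := by
  have hboxed : GKAmFrom Y (k • Γ.map FormM.box,
      k • ∑ i, ({FormM.box (φs i)} : Multiset FormM)) := by
    refine (mix h₀.box_zero (mix_sum Finset.univ _ _ fun i _ => boxn k (hs i))).of_eq ?_
    rw [← Multiset.map_nsmul, hsplit, Multiset.map_add, Finset.smul_sum, add_zero]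
    congr 2
    exact (map_sum (Multiset.mapAddMonoidHom FormM.box) _ _).symm
  exact mix (id Δ) (of_nsmul hk hboxed)

end GKAmFrom

/-- The rule (□_{k,n}) is GK(A_m)-derivable: for all k ≥ 1, n ≥ 0,
multisets Γ, Δ, Γ₀, Γ₁, …, Γₙ with kΓ = Γ₀ ⊎ Γ₁ ⊎ … ⊎ Γₙ and formulas φ₁, …, φₙ,
the sequent Δ, □Γ ⇒ □φ₁, …, □φₙ, Δ is derivable from the leaves Γ₀ ⇒ and
Γᵢ ⇒ k[φᵢ] (1 ≤ i ≤ n). -/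
theorem stmt_7 (k n : ℕ) (hk : 1 ≤ k) (Γ Δ Γ₀ : Multiset FormM)
    (Γs : Fin n → Multiset FormM) (φs : Fin n → FormM)
    (hsplit : k • Γ = Γ₀ + ∑ i, Γs i) :
    GKAmFrom
      ({S | S = (Γ₀, (0 : Multiset FormM)) ∨
            ∃ i : Fin n, S = (Γs i, k • ({φs i} : Multiset FormM))})
      (Δ + Γ.map FormM.box,
        (∑ i : Fin n, ({FormM.box (φs i)} : Multiset FormM)) + Δ) := by
  refine GKAmFrom.box_split hk hsplit (GKAmFrom.leaf (Or.inl rfl)) fun i => ?_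
  exact GKAmFrom.leaf (Or.inr ⟨i, rfl⟩)
end

section
/- The rules (→⇒) and (⇒→) are GK(A_m)^r-invertible; in fact, for every m ∈ ℕ: if Γ, m[φ→ψ] ⇒ Δ is GK(A_m)^r-derivable then Γ, m[ψ] ⇒ m[φ], Δ is GK(A_m)^r-derivable, and if Γ ⇒ m[φ→ψ], Δ is GK(A_m)^r-derivable then Γ, m[φ] ⇒ m[ψ], Δ is GK(A_m)^r-derivable. -/
/-- The restricted calculus GK(A_m)^r, with rules (ID), (→⇒), (⇒→) and
(□_{k,n}). -/
inductive GKAmR : SeqM → Prop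
  | id (Δ : Multiset FormM) : GKAmR (Δ, Δ)
  | impL {Γ Δ : Multiset FormM} {φ ψ : FormM} :
      GKAmR (Γ + {ψ}, {φ} + Δ) → GKAmR (Γ + {FormM.imp φ ψ}, Δ)
  | impR {Γ Δ : Multiset FormM} {φ ψ : FormM} :
      GKAmR (Γ + {φ}, {ψ} + Δ) → GKAmR (Γ, {FormM.imp φ ψ} + Δ)
  | boxkn {Γ Δ : Multiset FormM} {n : ℕ} (k : ℕ) (hk : 1 ≤ k)
      (Γ₀ : Multiset FormM) (Γs : Fin n → Multiset FormM) (φs : Fin n → FormM)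
      (hsplit : k • Γ = Γ₀ + ∑ i, Γs i)
      (h0 : GKAmR (Γ₀, (0 : Multiset FormM)))
      (hi : ∀ i : Fin n, GKAmR (Γs i, k • ({φs i} : Multiset FormM))) :
      GKAmR (Δ + Γ.map FormM.box,
        (∑ i : Fin n, ({FormM.box (φs i)} : Multiset FormM)) + Δ)

/-! Both inversions go by induction on the derivation. An implication is never boxed, so in an
instance of (□_{k,n}) it sits in the side context, which the rule leaves arbitrary; in (ID) and
(□_{k,n}) the inverted sequent is therefore obtained by re-deriving the conclusion with a
balanced extra context and applying the dual implication rule. -/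

open FormM

theorem Multiset.eq_or_exists_of_add_singleton_eq {α : Type*} {a b : Multiset α} {x y : α}
    (h : a + {x} = b + {y}) : (x = y ∧ a = b) ∨ ∃ c, a = c + {y} ∧ b = c + {x} := by
  simp only [add_comm _ {_}, Multiset.singleton_add] at h ⊢
  rcases Multiset.cons_eq_cons.mp h with ⟨hxy, hab⟩ | ⟨-, c, ha, hb⟩
  · exact .inl ⟨hxy, hab⟩
  · exact .inr ⟨c, ha, hb⟩

theorem FormM.imp_mem_of_mem_add_map_box {Δ Γ : Multiset FormM} {φ ψ : FormM}
    (h : imp φ ψ ∈ Δ + Γ.map box) : imp φ ψ ∈ Δ := by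
  simpa using h

theorem FormM.imp_mem_of_mem_sum_box_add {n : ℕ} {φs : Fin n → FormM} {Δ : Multiset FormM}
    {φ ψ : FormM} (h : imp φ ψ ∈ (∑ i, ({box (φs i)} : Multiset FormM)) + Δ) : imp φ ψ ∈ Δ := by
  simpa [Multiset.mem_sum] using h

namespace GKAmR

theorem congr {Γ Δ Γ' Δ' : Multiset FormM} (h : GKAmR (Γ, Δ)) (hΓ : Γ = Γ') (hΔ : Δ = Δ') :
    GKAmR (Γ', Δ') :=
  hΓ ▸ hΔ ▸ h

theorem add_both {Γ Δ : Multiset FormM} (h : GKAmR (Γ, Δ)) (Θ : Multiset FormM) :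
    GKAmR (Γ + Θ, Δ + Θ) := by
  generalize hS : (Γ, Δ) = S at h
  induction h generalizing Γ Δ with
  | id =>
    obtain ⟨rfl, rfl⟩ := Prod.mk.inj hS
    exact id _
  | impL _ ih =>
    obtain ⟨rfl, rfl⟩ := Prod.mk.inj hS
    exact (impL ((ih rfl).congr (add_right_comm ..) (add_assoc ..))).congr
      (add_right_comm ..) rfl
  | impR _ ih =>
    obtain ⟨rfl, rfl⟩ := Prod.mk.inj hS
    exact (impR ((ih rfl).congr (add_right_comm ..) (add_assoc ..))).congr rfl
      (add_assoc ..).symm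
  | boxkn k hk Γ₀ Γs φs hsplit h0 hi =>
    obtain ⟨rfl, rfl⟩ := Prod.mk.inj hS
    exact (boxkn (Δ := _ + Θ) k hk Γ₀ Γs φs hsplit h0 hi).congr (add_right_comm ..)
      (add_assoc ..).symm

theorem add_singleton_add_imp_right {Γ Δ : Multiset FormM} (h : GKAmR (Γ, Δ)) (φ ψ : FormM) :
    GKAmR (Γ + {ψ}, {φ} + (Δ + {imp φ ψ})) := by
  have h' : GKAmR (Γ + {ψ} + {φ}, {ψ} + ({φ} + Δ)) :=
    (h.add_both ({ψ} + {φ})).congr (add_assoc ..).symm (by abel)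
  exact (impR h').congr rfl (by abel)

theorem add_imp_add_singleton_left {Γ Δ : Multiset FormM} (h : GKAmR (Γ, Δ)) (φ ψ : FormM) :
    GKAmR (Γ + {imp φ ψ} + {φ}, {ψ} + Δ) := by
  have h' : GKAmR (Γ + {φ} + {ψ}, {φ} + ({ψ} + Δ)) :=
    (h.add_both ({φ} + {ψ})).congr (add_assoc ..).symm (by abel)
  exact (impL h').congr (add_right_comm ..) rfl

theorem inv_impL {Γ Δ : Multiset FormM} {φ ψ : FormM} (h : GKAmR (Γ + {imp φ ψ}, Δ)) :
    GKAmR (Γ + {ψ}, {φ} + Δ) := by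
  generalize hS : (Γ + {imp φ ψ}, Δ) = S at h
  induction h generalizing Γ Δ with
  | id =>
    obtain ⟨rfl, rfl⟩ := Prod.mk.inj hS
    exact (id Γ).add_singleton_add_imp_right φ ψ
  | @impL _ _ α β h' ih =>
    obtain ⟨hΓ, rfl⟩ := Prod.mk.inj hS
    rcases Multiset.eq_or_exists_of_add_singleton_eq hΓ with ⟨hαβ, rfl⟩ | ⟨c, rfl, rfl⟩
    · cases hαβ
      exact h'
    · have h'' : GKAmR (c + {ψ} + {β}, {α} + ({φ} + Δ)) :=
        (ih (Prod.ext (add_right_comm ..) rfl)).congr (add_right_comm ..) (add_left_comm ..)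
      exact (impL h'').congr (add_right_comm ..) rfl
  | @impR _ Δ₁ α β _ ih =>
    obtain ⟨rfl, rfl⟩ := Prod.mk.inj hS
    have h'' : GKAmR (Γ + {ψ} + {α}, {β} + ({φ} + Δ₁)) :=
      (ih (Prod.ext (add_right_comm ..) rfl)).congr (add_right_comm ..) (add_left_comm ..)
    exact (impR h'').congr rfl (add_left_comm ..)
  | @boxkn Γb Δb _ k hk Γ₀ Γs φs hsplit h0 hi =>
    obtain ⟨hΓ, rfl⟩ := Prod.mk.inj hS
    have hmem : imp φ ψ ∈ Δb + Γb.map box := hΓ ▸ Multiset.mem_add.mpr (.inr (by simp))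
    obtain ⟨Δ', hΔ'⟩ := Multiset.exists_cons_of_mem (imp_mem_of_mem_add_map_box hmem)
    rw [← Multiset.singleton_add] at hΔ'
    subst hΔ'
    obtain rfl : Γ = Δ' + Γb.map box := add_right_cancel (b := {imp φ ψ}) (by rw [hΓ]; abel)
    exact ((boxkn (Δ := Δ') k hk Γ₀ Γs φs hsplit h0 hi).add_singleton_add_imp_right φ ψ).congr
      rfl (by abel)

theorem inv_impR {Γ Δ : Multiset FormM} {φ ψ : FormM} (h : GKAmR (Γ, {imp φ ψ} + Δ)) :
    GKAmR (Γ + {φ}, {ψ} + Δ) := by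
  generalize hS : (Γ, {imp φ ψ} + Δ) = S at h
  induction h generalizing Γ Δ with
  | id =>
    obtain ⟨rfl, rfl⟩ := Prod.mk.inj hS
    exact ((id Δ).add_imp_add_singleton_left φ ψ).congr (by abel) rfl
  | @impL Γ₁ _ α β _ ih =>
    obtain ⟨rfl, rfl⟩ := Prod.mk.inj hS
    have h'' : GKAmR (Γ₁ + {φ} + {β}, {α} + ({ψ} + Δ)) :=
      (ih (Prod.ext rfl (add_left_comm ..))).congr (add_right_comm ..) (add_left_comm ..)
    exact (impL h'').congr (add_right_comm ..) rfl
  | @impR _ _ α β h' ih =>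
    obtain ⟨rfl, hΔ⟩ := Prod.mk.inj hS
    rw [add_comm {_}, add_comm {_}] at hΔ
    rcases Multiset.eq_or_exists_of_add_singleton_eq hΔ with ⟨hαβ, rfl⟩ | ⟨c, rfl, rfl⟩
    · cases hαβ
      exact h'
    · have h'' : GKAmR (Γ + {φ} + {α}, {β} + ({ψ} + c)) :=
        (ih (Prod.ext rfl (by dsimp only; abel))).congr (add_right_comm ..) (add_left_comm ..)
      exact (impR h'').congr rfl (by abel)
  | @boxkn Γb Δb _ k hk Γ₀ Γs φs hsplit h0 hi =>
    obtain ⟨rfl, hΔ⟩ := Prod.mk.inj hS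
    have hmem : imp φ ψ ∈ (∑ i, ({box (φs i)} : Multiset FormM)) + Δb :=
      hΔ ▸ Multiset.mem_add.mpr (.inl (by simp))
    obtain ⟨Δ', hΔ'⟩ := Multiset.exists_cons_of_mem (imp_mem_of_mem_sum_box_add hmem)
    rw [← Multiset.singleton_add] at hΔ'
    subst hΔ'
    obtain rfl : Δ = (∑ i, ({box (φs i)} : Multiset FormM)) + Δ' :=
      add_left_cancel (a := {imp φ ψ}) (by rw [hΔ]; abel)
    exact ((boxkn (Δ := Δ') k hk Γ₀ Γs φs hsplit h0 hi).add_imp_add_singleton_left φ ψ).congr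
      (by abel) (by abel)

theorem inv_impL_nsmul (m : ℕ) {Γ Δ : Multiset FormM} {φ ψ : FormM}
    (h : GKAmR (Γ + m • {imp φ ψ}, Δ)) : GKAmR (Γ + m • {ψ}, m • {φ} + Δ) := by
  induction m generalizing Γ Δ with
  | zero => simpa using h
  | succ m ih =>
    have := inv_impL (h.congr (by rw [succ_nsmul, add_assoc]) rfl)
    exact (ih (this.congr (add_right_comm ..) rfl)).congr (by rw [succ_nsmul]; abel)
      (by rw [succ_nsmul]; abel)

theorem inv_impR_nsmul (m : ℕ) {Γ Δ : Multiset FormM} {φ ψ : FormM}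
    (h : GKAmR (Γ, m • {imp φ ψ} + Δ)) : GKAmR (Γ + m • {φ}, m • {ψ} + Δ) := by
  induction m generalizing Γ Δ with
  | zero => simpa using h
  | succ m ih =>
    have := inv_impR (Δ := m • {imp φ ψ} + Δ) (h.congr rfl (by rw [succ_nsmul]; abel))
    exact (ih (this.congr rfl (add_left_comm ..))).congr (by rw [succ_nsmul]; abel)
      (by rw [succ_nsmul]; abel)

end GKAmR

/-- The rules (→⇒) and (⇒→) are GK(A_m)^r-invertible; in fact, for
every m ∈ ℕ, if Γ, m[φ→ψ] ⇒ Δ is GK(A_m)^r-derivable then so is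
Γ, m[ψ] ⇒ m[φ], Δ, and if Γ ⇒ m[φ→ψ], Δ is GK(A_m)^r-derivable then so is
Γ, m[φ] ⇒ m[ψ], Δ. -/
theorem stmt_8 :
    (∀ (Γ Δ : Multiset FormM) (φ ψ : FormM),
      GKAmR (Γ + {FormM.imp φ ψ}, Δ) → GKAmR (Γ + {ψ}, {φ} + Δ)) ∧
    (∀ (Γ Δ : Multiset FormM) (φ ψ : FormM),
      GKAmR (Γ, {FormM.imp φ ψ} + Δ) → GKAmR (Γ + {φ}, {ψ} + Δ)) ∧
    (∀ (m : ℕ) (Γ Δ : Multiset FormM) (φ ψ : FormM),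
      GKAmR (Γ + m • ({FormM.imp φ ψ} : Multiset FormM), Δ) →
      GKAmR (Γ + m • ({ψ} : Multiset FormM), m • ({φ} : Multiset FormM) + Δ)) ∧
    (∀ (m : ℕ) (Γ Δ : Multiset FormM) (φ ψ : FormM),
      GKAmR (Γ, m • ({FormM.imp φ ψ} : Multiset FormM) + Δ) →
      GKAmR (Γ + m • ({φ} : Multiset FormM), m • ({ψ} : Multiset FormM) + Δ)) :=
  ⟨fun _ _ _ _ => GKAmR.inv_impL, fun _ _ _ _ => GKAmR.inv_impR,
    fun m _ _ _ _ => GKAmR.inv_impL_nsmul m, fun m _ _ _ _ => GKAmR.inv_impR_nsmul m⟩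
end

section
/- The cancellation rule is GK(A_m)^r-admissible: for every ℒ_Am□-formula φ and finite multisets Γ, Δ of ℒ_Am□-formulas, if Γ, φ ⇒ φ, Δ is GK(A_m)^r-derivable, then Γ ⇒ Δ is GK(A_m)^r-derivable. -/
/-!
Cancellation is proved by induction on `φ`. For `φ = α → β`, invertibility of (→⇒) and (⇒→) turns
`Γ, α → β ⇒ α → β, Δ` into `Γ, α, β ⇒ α, β, Δ`, and `α` and `β` are cancelled in turn. Otherwise one
inducts on the derivation, and the only real case is an instance of (□_{k,n}) in which `□ψ` is
principal on both sides: `ψ` occurs in the context `Γ` whose `k` copies are distributed over the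
premises, and one premise is `P ⇒ k[ψ]`, into which `Γ₀ ⇒` is mixed. Cancelling in `P ⇒ k[ψ]` the
`m` copies of `ψ` that `P` contains (induction hypothesis) leaves `G ⇒ c[ψ]` with `c = k - m`, and
the other `c` copies of `ψ` sit in the remaining premises. If `c = 0`, `G ⇒` becomes the new premise
`Γ₀ ⇒`; otherwise multiplying those premises by `c` and cutting their copies of `ψ` against
`G ⇒ c[ψ]` gives an instance of (□_{ck,n-1}) with the desired conclusion. Cut is mix followed by
cancellation of `ψ`; mix and multiplication of sequents are admissible by induction on derivations,
two instances of (□) with `k₁` and `k₂` being mixed into one with `k₁ k₂`.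
-/

namespace Multiset

theorem singleton_add_eq_singleton_add {α : Type*} {s t : Multiset α} {a b : α} :
    {a} + s = {b} + t ↔ a = b ∧ s = t ∨ a ≠ b ∧ ∃ u, s = {b} + u ∧ t = {a} + u := by
  simp only [singleton_add]
  exact cons_eq_cons

theorem exists_eq_singleton_add_of_mem {α : Type*} {s : Multiset α} {a : α} (h : a ∈ s) :
    ∃ t, s = {a} + t := by
  simpa only [singleton_add] using exists_cons_of_mem h

theorem sum_fin_singleton {α : Type*} {n : ℕ} (f : Fin n → α) :
    ∑ i, ({f i} : Multiset α) = List.ofFn f := by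
  rw [Finset.sum_eq_multiset_sum, ← Function.comp_def, ← map_map, sum_map_singleton,
    Fin.univ_val_map]

theorem exists_split_of_le_sum_map {α : Type*} (f : α → ℕ) (S : Multiset α) {n : ℕ}
    (h : n ≤ (S.map f).sum) :
    ∃ T : Multiset (α × ℕ), T.map Prod.fst = S ∧ (T.map Prod.snd).sum = n ∧
      ∀ q ∈ T, q.2 ≤ f q.1 := by
  induction S using Multiset.induction_on generalizing n with
  | empty => exact ⟨0, rfl, by simpa using (Nat.le_zero.mp (by simpa using h)).symm, by simp⟩
  | cons a S ih =>
    rw [map_cons, sum_cons] at h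
    obtain ⟨T, hT, hsum, hle⟩ := ih (n := n - min n (f a)) (by omega)
    refine ⟨(a, min n (f a)) ::ₘ T, by simp [hT], ?_, ?_⟩
    · simp only [map_cons, sum_cons, hsum]
      omega
    · simp only [mem_cons, forall_eq_or_imp]
      exact ⟨min_le_right .., hle⟩

end Multiset

open Multiset

/-- `GKAmR` with the premises `Γᵢ ⇒ k[φᵢ]` of (□_{k,n}) given as a multiset of pairs `(Γᵢ, φᵢ)`
rather than a `Fin n`-indexed family, so that single premises are easy to remove or rewrite. -/
inductive GKAmR' : SeqM → Prop
  | id (Δ : Multiset FormM) : GKAmR' (Δ, Δ)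
  | impL {Γ Δ : Multiset FormM} {φ ψ : FormM} :
      GKAmR' (Γ + {ψ}, {φ} + Δ) → GKAmR' (Γ + {.imp φ ψ}, Δ)
  | impR {Γ Δ : Multiset FormM} {φ ψ : FormM} :
      GKAmR' (Γ + {φ}, {ψ} + Δ) → GKAmR' (Γ, {.imp φ ψ} + Δ)
  | box {Γ Δ : Multiset FormM} (k : ℕ) (hk : 1 ≤ k) (Γ₀ : Multiset FormM)
      (S : Multiset (Multiset FormM × FormM))
      (hsplit : k • Γ = Γ₀ + (S.map Prod.fst).sum)
      (h0 : GKAmR' (Γ₀, 0))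
      (hS : ∀ p ∈ S, GKAmR' (p.1, k • {p.2})) :
      GKAmR' (Δ + Γ.map .box, (S.map Prod.snd).map .box + Δ)

namespace GKAmR'

theorem of_eq {Γ Δ Γ' Δ' : Multiset FormM} (h : GKAmR' (Γ, Δ)) (hΓ : Γ = Γ') (hΔ : Δ = Δ') :
    GKAmR' (Γ', Δ') :=
  hΓ ▸ hΔ ▸ h

theorem of_gkamR {s : SeqM} (h : GKAmR s) : GKAmR' s := by
  induction h with
  | id Δ => exact id Δ
  | impL _ ih => exact impL ih
  | impR _ ih => exact impR ih
  | @boxkn Γ Δ n k hk Γ₀ Γs φs hsplit _ _ ih0 ihi =>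
    have h := box (Γ := Γ) (Δ := Δ) k hk Γ₀ (List.ofFn fun i => (Γs i, φs i))
      (by simpa [List.sum_ofFn] using hsplit) ih0 (by simpa using ihi)
    refine h.of_eq rfl ?_
    simp [sum_fin_singleton, Function.comp_def]

theorem to_gkamR {s : SeqM} (h : GKAmR' s) : GKAmR s := by
  induction h with
  | id Δ => exact .id Δ
  | impL _ ih => exact .impL ih
  | impR _ ih => exact .impR ih
  | @box Γ Δ k hk Γ₀ S hsplit _ _ ih0 ihS =>
    have h := GKAmR.boxkn (Γ := Γ) (Δ := Δ) k hk Γ₀ (fun i => S.toList[i.1].1)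
      (fun i => S.toList[i.1].2) (by simpa using hsplit) ih0
      (fun i => ihS _ (S.mem_toList.mp (List.getElem_mem _)))
    convert h using 3
    rw [sum_fin_singleton, List.ofFn_getElem_eq_map S.toList fun p => p.2.box, ← map_coe,
      coe_toList, map_map]
    rfl

theorem id_add (Θ : Multiset FormM) {Γ Δ : Multiset FormM} (h : GKAmR' (Γ, Δ)) :
    GKAmR' (Θ + Γ, Θ + Δ) := by
  generalize hs : (Γ, Δ) = s at h
  induction h generalizing Γ Δ with
  | id => cases hs; exact id _
  | @impL Γ _ _ _ _ ih =>
    cases hs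
    exact (impL (Γ := Θ + Γ) (ih rfl |>.of_eq (by abel) (by abel))).of_eq (by abel) rfl
  | @impR _ Δ _ _ _ ih =>
    cases hs
    exact (impR (Δ := Θ + Δ) (ih rfl |>.of_eq (by abel) (by abel))).of_eq rfl (by abel)
  | @box _ Δ k hk Γ₀ S hsplit h0 hS =>
    cases hs
    exact (box (Δ := Θ + Δ) k hk Γ₀ S hsplit h0 hS).of_eq (by abel) (by abel)

theorem impL_nsmul (n : ℕ) {Γ Δ : Multiset FormM} {φ ψ : FormM}
    (h : GKAmR' (Γ + n • {ψ}, n • {φ} + Δ)) : GKAmR' (Γ + n • {.imp φ ψ}, Δ) := by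
  induction n generalizing Γ with
  | zero => simpa using h
  | succ n ih =>
    have h' := impL (Γ := Γ + n • {ψ}) (Δ := n • {φ} + Δ)
      (h.of_eq (by rw [succ_nsmul]; abel) (by rw [succ_nsmul]; abel))
    exact (ih (Γ := Γ + {.imp φ ψ}) (h'.of_eq (by abel) rfl)).of_eq
      (by rw [succ_nsmul]; abel) rfl

theorem impR_nsmul (n : ℕ) {Γ Δ : Multiset FormM} {φ ψ : FormM}
    (h : GKAmR' (Γ + n • {φ}, n • {ψ} + Δ)) : GKAmR' (Γ, n • {.imp φ ψ} + Δ) := by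
  induction n generalizing Δ with
  | zero => simpa using h
  | succ n ih =>
    have h' := impR (Γ := Γ + n • {φ}) (Δ := n • {ψ} + Δ)
      (h.of_eq (by rw [succ_nsmul]; abel) (by rw [succ_nsmul]; abel))
    exact (ih (Δ := {.imp φ ψ} + Δ) (h'.of_eq rfl (by abel))).of_eq rfl
      (by rw [succ_nsmul]; abel)

theorem nsmul {Γ Δ : Multiset FormM} (h : GKAmR' (Γ, Δ)) (n : ℕ) : GKAmR' (n • Γ, n • Δ) := by
  generalize hs : (Γ, Δ) = s at h
  induction h generalizing Γ Δ with
  | id => cases hs; exact id _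
  | impL _ ih =>
    cases hs
    exact (impL_nsmul n (ih rfl |>.of_eq (smul_add ..) (smul_add ..))).of_eq
      (smul_add ..).symm rfl
  | impR _ ih =>
    cases hs
    exact (impR_nsmul n (ih rfl |>.of_eq (smul_add ..) (smul_add ..))).of_eq rfl
      (smul_add ..).symm
  | @box Γ Δ k hk Γ₀ S hsplit _ hS ih0 =>
    cases hs
    refine (box (Γ := n • Γ) (Δ := n • Δ) k hk (n • Γ₀) (n • S) ?_
      (ih0 rfl |>.of_eq rfl (smul_zero n)) ?_).of_eq ?_ ?_
    · rw [map_nsmul, sum_nsmul, smul_comm, hsplit, smul_add]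
    · exact fun p hp => hS p (mem_nsmul.mp hp).2
    all_goals simp only [smul_add, map_nsmul]

theorem box_add_box {Γ₁ Δ₁ Γ₂ Δ₂ Γ₀₁ Γ₀₂ : Multiset FormM} {k₁ k₂ : ℕ} (hk₁ : 1 ≤ k₁)
    (hk₂ : 1 ≤ k₂) {S₁ S₂ : Multiset (Multiset FormM × FormM)}
    (hsplit₁ : k₁ • Γ₁ = Γ₀₁ + (S₁.map Prod.fst).sum)
    (hsplit₂ : k₂ • Γ₂ = Γ₀₂ + (S₂.map Prod.fst).sum)
    (h0 : GKAmR' (k₂ • Γ₀₁ + k₁ • Γ₀₂, 0))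
    (hS₁ : ∀ p ∈ S₁, GKAmR' (p.1, k₁ • {p.2})) (hS₂ : ∀ p ∈ S₂, GKAmR' (p.1, k₂ • {p.2})) :
    GKAmR' (Δ₁ + Γ₁.map .box + (Δ₂ + Γ₂.map .box),
      (S₁.map Prod.snd).map .box + Δ₁ + ((S₂.map Prod.snd).map .box + Δ₂)) := by
  let S := S₁.map (fun p => (k₂ • p.1, p.2)) + S₂.map (fun p => (k₁ • p.1, p.2))
  have hsplit : (k₁ * k₂) • (Γ₁ + Γ₂) = (k₂ • Γ₀₁ + k₁ • Γ₀₂) + (S.map Prod.fst).sum := by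
    calc (k₁ * k₂) • (Γ₁ + Γ₂) = k₂ • (k₁ • Γ₁) + k₁ • (k₂ • Γ₂) := by module
      _ = _ := by
        simp only [hsplit₁, hsplit₂, S, map_add, map_map, Function.comp_def, sum_add,
          sum_map_nsmul]
        module
  have hS : ∀ p ∈ S, GKAmR' (p.1, (k₁ * k₂) • {p.2}) := by
    intro p hp
    rcases mem_add.mp hp with hp | hp <;> obtain ⟨q, hq, rfl⟩ := mem_map.mp hp
    · exact ((hS₁ q hq).nsmul k₂).of_eq rfl (mul_nsmul ..).symm
    · exact ((hS₂ q hq).nsmul k₁).of_eq rfl (mul_nsmul' ..).symm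
  refine (box (Γ := Γ₁ + Γ₂) (Δ := Δ₁ + Δ₂) (k₁ * k₂)
    (Nat.one_le_iff_ne_zero.mpr (by positivity)) _ S hsplit h0 hS).of_eq ?_ ?_
  · simp only [map_add]; abel
  · simp only [S, map_add, map_map, Function.comp_def]; abel

theorem add {Γ₁ Δ₁ Γ₂ Δ₂ : Multiset FormM} (h₁ : GKAmR' (Γ₁, Δ₁)) (h₂ : GKAmR' (Γ₂, Δ₂)) :
    GKAmR' (Γ₁ + Γ₂, Δ₁ + Δ₂) := by
  generalize hs₂ : (Γ₂, Δ₂) = s₂ at h₂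
  induction h₂ generalizing Γ₁ Δ₁ Γ₂ Δ₂ with
  | id => cases hs₂; exact (id_add _ h₁).of_eq (add_comm ..) (add_comm ..)
  | @impL Γ _ _ _ _ ih =>
    cases hs₂
    exact (impL (Γ := Γ₁ + Γ) (ih h₁ rfl |>.of_eq (by abel) (by abel))).of_eq (by abel) rfl
  | @impR _ Δ _ _ _ ih =>
    cases hs₂
    exact (impR (Δ := Δ₁ + Δ) (ih h₁ rfl |>.of_eq (by abel) (by abel))).of_eq rfl (by abel)
  | @box Γ₂ Δ₂ k₂ hk₂ Γ₀₂ S₂ hsplit₂ h0₂ hS₂ ih0₂ =>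
    cases hs₂
    have add_nsmul_Γ₀₂ : ∀ (n : ℕ) {Γ Δ}, GKAmR' (Γ, Δ) → GKAmR' (Γ + n • Γ₀₂, Δ) := by
      intro n
      induction n with
      | zero => simp
      | succ n ihn =>
        exact fun h => (ih0₂ (ihn h) rfl).of_eq (by rw [succ_nsmul, add_assoc]) (add_zero _)
    generalize hs₁ : (Γ₁, Δ₁) = s₁ at h₁
    induction h₁ generalizing Γ₁ Δ₁ with
    | id => cases hs₁; exact id_add _ (box k₂ hk₂ Γ₀₂ S₂ hsplit₂ h0₂ hS₂)
    | @impL Γ _ _ _ _ ih =>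
      cases hs₁
      exact (impL (Γ := Γ + (Δ₂ + Γ₂.map .box)) (ih rfl |>.of_eq (by abel) (by abel))).of_eq
        (by abel) rfl
    | @impR _ Δ _ _ _ ih =>
      cases hs₁
      exact (impR (Δ := Δ + ((S₂.map Prod.snd).map .box + Δ₂))
        (ih rfl |>.of_eq (by abel) (by abel))).of_eq rfl (by abel)
    | @box Γ₁ Δ₁ k₁ hk₁ Γ₀₁ S₁ hsplit₁ h0₁ hS₁ =>
      cases hs₁
      exact box_add_box hk₁ hk₂ hsplit₁ hsplit₂
        ((add_nsmul_Γ₀₂ k₁ (h0₁.nsmul k₂)).of_eq rfl (smul_zero _)) hS₁ hS₂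

theorem impR_id (φ ψ : FormM) : GKAmR' ({ψ}, {.imp φ ψ} + {φ}) :=
  impR ((id ({ψ} + {φ})).of_eq rfl rfl)

theorem impL_id (φ ψ : FormM) : GKAmR' ({φ} + {.imp φ ψ}, {ψ}) :=
  impL ((id ({φ} + {ψ})).of_eq rfl (by abel))

theorem impL_inv {Γ Δ : Multiset FormM} {φ ψ : FormM} (h : GKAmR' (Γ + {.imp φ ψ}, Δ)) :
    GKAmR' (Γ + {ψ}, {φ} + Δ) := by
  generalize hs : (Γ + {.imp φ ψ}, Δ) = s at h
  induction h generalizing Γ Δ with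
  | id =>
    obtain ⟨rfl, rfl⟩ := Prod.mk.inj hs
    exact (id_add Γ (impR_id φ ψ)).of_eq (by abel) (by abel)
  | @impL Γ' _ α β h ih =>
    obtain ⟨hΓ, rfl⟩ := Prod.mk.inj hs
    rw [add_comm Γ, add_comm Γ'] at hΓ
    rcases singleton_add_eq_singleton_add.mp hΓ with ⟨he, rfl⟩ | ⟨-, u, rfl, rfl⟩
    · cases he
      exact h
    · have h' := ih (Γ := u + {β}) (Δ := {α} + Δ) (by rw [add_comm {_} u, add_right_comm])
      exact (impL (Γ := u + {ψ}) (φ := α) (ψ := β) (h'.of_eq (by abel) (by abel))).of_eq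
        (by abel) rfl
  | @impR _ Δ' α β _ ih =>
    obtain ⟨rfl, rfl⟩ := Prod.mk.inj hs
    have h' := ih (Γ := Γ + {α}) (Δ := {β} + Δ') (by rw [add_right_comm])
    exact (impR (Γ := Γ + {ψ}) (Δ := {φ} + Δ') (φ := α) (ψ := β)
      (h'.of_eq (by abel) (by abel))).of_eq rfl (by abel)
  | @box Γc Δc k hk Γ₀ S hsplit h0 hS =>
    obtain ⟨hΓ, rfl⟩ := Prod.mk.inj hs
    obtain ⟨t, rfl⟩ : ∃ t, Δc = {.imp φ ψ} + t :=
      exists_eq_singleton_add_of_mem (by simpa using congrArg (FormM.imp φ ψ ∈ ·) hΓ)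
    have hΓt : Γ = t + Γc.map .box := add_right_cancel (hΓ.trans (by abel))
    exact (add (box (Δ := t) k hk Γ₀ S hsplit h0 hS) (impR_id φ ψ)).of_eq (by rw [hΓt])
      (by abel)

theorem impR_inv {Γ Δ : Multiset FormM} {φ ψ : FormM} (h : GKAmR' (Γ, {.imp φ ψ} + Δ)) :
    GKAmR' (Γ + {φ}, {ψ} + Δ) := by
  generalize hs : (Γ, {.imp φ ψ} + Δ) = s at h
  induction h generalizing Γ Δ with
  | id =>
    obtain ⟨rfl, hΘ⟩ := Prod.mk.inj hs
    exact (id_add Δ (impL_id φ ψ)).of_eq (by rw [← hΘ]; abel) (by abel)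
  | @impL Γ' _ α β _ ih =>
    obtain ⟨rfl, rfl⟩ := Prod.mk.inj hs
    have h' := ih (Γ := Γ' + {β}) (Δ := {α} + Δ) (by rw [add_left_comm])
    exact (impL (Γ := Γ' + {φ}) (Δ := {ψ} + Δ) (φ := α) (ψ := β)
      (h'.of_eq (by abel) (by abel))).of_eq (by abel) rfl
  | @impR _ _ α β h ih =>
    obtain ⟨rfl, hΔ⟩ := Prod.mk.inj hs
    rcases singleton_add_eq_singleton_add.mp hΔ with ⟨he, rfl⟩ | ⟨-, u, rfl, rfl⟩
    · cases he
      exact h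
    · have h' := ih (Γ := Γ + {α}) (Δ := {β} + u) (by rw [add_left_comm])
      exact (impR (Γ := Γ + {φ}) (Δ := {ψ} + u) (φ := α) (ψ := β)
        (h'.of_eq (by abel) (by abel))).of_eq rfl (by abel)
  | @box Γc Δc k hk Γ₀ S hsplit h0 hS =>
    obtain ⟨rfl, hΔ⟩ := Prod.mk.inj hs
    obtain ⟨t, rfl⟩ : ∃ t, Δc = {.imp φ ψ} + t :=
      exists_eq_singleton_add_of_mem (by simpa using congrArg (FormM.imp φ ψ ∈ ·) hΔ)
    have hΔt : Δ = (S.map Prod.snd).map .box + t := add_left_cancel (hΔ.trans (by abel))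
    exact (add (box (Δ := t) k hk Γ₀ S hsplit h0 hS) (impL_id φ ψ)).of_eq (by abel)
      (by rw [hΔt]; abel)

def Cancellable (φ : FormM) : Prop :=
  ∀ ⦃Γ Δ : Multiset FormM⦄, GKAmR' (Γ + {φ}, {φ} + Δ) → GKAmR' (Γ, Δ)

theorem Cancellable.nsmul {φ : FormM} (hφ : Cancellable φ) (n : ℕ) {Γ Δ : Multiset FormM}
    (h : GKAmR' (Γ + n • {φ}, n • {φ} + Δ)) : GKAmR' (Γ, Δ) := by
  induction n generalizing Γ Δ with
  | zero => simpa using h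
  | succ n ih => exact ih (hφ (h.of_eq (by rw [succ_nsmul]; abel) (by rw [succ_nsmul]; abel)))

theorem Cancellable.imp {α β : FormM} (hα : Cancellable α) (hβ : Cancellable β) :
    Cancellable (.imp α β) := by
  intro Γ Δ h
  have h' := impL_inv ((impR_inv h).of_eq (add_right_comm ..) rfl)
  exact hβ (hα (h'.of_eq (add_right_comm ..) rfl))

theorem Cancellable.cut {ψ : FormM} (hψ : Cancellable ψ) {G X Y : Multiset FormM} {c m : ℕ}
    (hG : GKAmR' (G, c • {ψ})) (h : GKAmR' (m • {ψ} + X, Y)) :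
    GKAmR' (c • X + m • G, c • Y) :=
  hψ.nsmul (c * m) ((add (h.nsmul c) (hG.nsmul m)).of_eq (by module) (by module))

theorem Cancellable.box_cut {ψ : FormM} (hψ : Cancellable ψ) {k c : ℕ} (hk : 1 ≤ k) (hc : 1 ≤ c)
    {Γ G : Multiset FormM} {T : Multiset ((Multiset FormM × FormM) × ℕ)}
    (hG : GKAmR' (G, c • {ψ})) (hsplit : k • Γ = G + (T.map (·.1.1)).sum)
    (hTc : (T.map Prod.snd).sum = c) (hT : ∀ q ∈ T, GKAmR' (q.2 • {ψ} + q.1.1, k • {q.1.2}))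
    (Δ : Multiset FormM) :
    GKAmR' (Δ + Γ.map .box, ((T.map Prod.fst).map Prod.snd).map .box + Δ) := by
  let S := T.map fun q => (c • q.1.1 + q.2 • G, q.1.2)
  have hsplit' : (c * k) • Γ = 0 + (S.map Prod.fst).sum := by
    have hG' : c • G = (T.map fun q => q.2 • G).sum := by
      rw [← hTc, sum_smul, map_map]
      rfl
    simp only [S, map_map, Function.comp_def, sum_map_add, sum_map_nsmul, ← hG', mul_nsmul',
      hsplit, smul_add, zero_add]
    abel
  refine (box (c * k) (Nat.one_le_iff_ne_zero.mpr (by positivity)) 0 S hsplit' (id 0) ?_).of_eq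
    rfl ?_
  · intro p hp
    obtain ⟨q, hq, rfl⟩ := mem_map.mp hp
    exact (hψ.cut hG (hT q hq)).of_eq rfl (mul_nsmul' ..).symm
  · simp only [S, map_map, Function.comp_def]

theorem Cancellable.box_principal {ψ : FormM} (hψ : Cancellable ψ) {k : ℕ} (hk : 1 ≤ k)
    {Γ P : Multiset FormM} {S : Multiset (Multiset FormM × FormM)}
    (hsplit : k • ({ψ} + Γ) = P + (S.map Prod.fst).sum)
    (hP : GKAmR' (P, k • {ψ})) (hS : ∀ p ∈ S, GKAmR' (p.1, k • {p.2})) (Δ : Multiset FormM) :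
    GKAmR' (Δ + Γ.map .box, (S.map Prod.snd).map .box + Δ) := by
  classical
  set m := min k (count ψ P) with hm
  obtain ⟨G, hPG⟩ : ∃ G, P = m • {ψ} + G := ⟨P - m • {ψ}, (add_tsub_cancel_of_le
    (nsmul_singleton ψ m ▸ le_count_iff_replicate_le.mp (min_le_right ..))).symm⟩
  rw [hPG] at hP hsplit
  have hkm : k • ({ψ} : Multiset FormM) = m • {ψ} + (k - m) • {ψ} := by
    rw [← add_nsmul, Nat.add_sub_cancel' (min_le_left ..)]
  have hG : GKAmR' (G, (k - m) • {ψ}) := hψ.nsmul m (hP.of_eq (add_comm ..) hkm)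
  rcases Nat.eq_zero_or_pos (k - m) with hc | hc
  · refine box k hk G S ?_ (hG.of_eq rfl (by rw [hc, zero_nsmul])) hS
    rw [smul_add, show m = k by omega, add_assoc] at hsplit
    exact add_left_cancel hsplit
  have hcount : k - m ≤ (S.map fun p => count ψ p.1).sum := by
    have := congrArg (count ψ) hsplit
    rw [hPG] at hm
    simp only [count_nsmul, count_add, count_singleton_self, count_sum, mul_add, mul_one] at this hm
    omega
  obtain ⟨T, hTS, hTc, hTle⟩ := exists_split_of_le_sum_map (fun p => count ψ p.1) S hcount
  have hX : ∀ q ∈ T, q.2 • {ψ} + (q.1.1 - q.2 • {ψ}) = q.1.1 := fun q hq =>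
    add_tsub_cancel_of_le (nsmul_singleton ψ q.2 ▸ le_count_iff_replicate_le.mp (hTle q hq))
  have hsum : (S.map Prod.fst).sum = (k - m) • {ψ} + (T.map fun q => q.1.1 - q.2 • {ψ}).sum := by
    rw [← hTS, map_map, ← hTc, sum_smul, map_map, ← sum_map_add]
    exact congrArg sum (map_congr rfl fun q hq => (hX q hq).symm)
  refine (hψ.box_cut hk hc (T := T.map fun q => ((q.1.1 - q.2 • {ψ}, q.1.2), q.2)) hG ?_ ?_ ?_
    Δ).of_eq rfl ?_
  · apply add_left_cancel (a := k • {ψ})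
    rw [← smul_add, hsplit, hsum, map_map, hkm]
    simp only [Function.comp_def]
    abel
  · rw [map_map]
    exact hTc
  · simp only [mem_map]
    rintro _ ⟨q, hq, rfl⟩
    exact (hS q.1 (hTS ▸ mem_map_of_mem _ hq)).of_eq (hX q hq).symm rfl
  · simp only [map_map, ← hTS, Function.comp_def]

theorem Cancellable.of_box_rule {φ : FormM} (hbox : ∀ ψ, φ = .box ψ → Cancellable ψ)
    {Γ Δ Γc Δc Γ₀ : Multiset FormM} {k : ℕ} (hk : 1 ≤ k) {S : Multiset (Multiset FormM × FormM)}
    (hsplit : k • Γc = Γ₀ + (S.map Prod.fst).sum) (h0 : GKAmR' (Γ₀, 0))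
    (hS : ∀ p ∈ S, GKAmR' (p.1, k • {p.2}))
    (hΓ : Γ + {φ} = Δc + Γc.map .box) (hΔ : {φ} + Δ = (S.map Prod.snd).map .box + Δc) :
    GKAmR' (Γ, Δ) := by
  by_cases hφ : φ ∈ Δc
  · obtain ⟨t, rfl⟩ := exists_eq_singleton_add_of_mem hφ
    refine (box (Δ := t) k hk Γ₀ S hsplit h0 hS).of_eq ?_ ?_
    · exact add_right_cancel (b := {φ}) (hΓ.trans (by abel)).symm
    · exact add_left_cancel (a := {φ}) (hΔ.trans (by abel)).symm
  obtain ⟨ψ, hψ, rfl⟩ : ∃ ψ ∈ Γc, .box ψ = φ := by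
    simpa [hφ] using congrArg (φ ∈ ·) hΓ
  obtain ⟨⟨P, ψ'⟩, hP, hψ'⟩ : ∃ p ∈ S, p.2 = ψ := by
    simpa [hφ] using congrArg (FormM.box ψ ∈ ·) hΔ
  obtain rfl : ψ' = ψ := hψ'
  obtain ⟨Γ', rfl⟩ := exists_eq_singleton_add_of_mem hψ
  obtain ⟨S', rfl⟩ := exists_eq_singleton_add_of_mem hP
  refine ((hbox _ rfl).box_principal hk (Γ := Γ') (P := Γ₀ + P) (S := S') ?_
    ((add h0 (hS _ hP)).of_eq rfl (zero_add _)) (fun q hq => hS q (mem_add.mpr (Or.inr hq)))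
    Δc).of_eq ?_ ?_
  · rw [hsplit]
    simp only [map_add, sum_add, map_singleton, sum_singleton]
    abel
  · refine add_right_cancel (b := {FormM.box _}) (hΓ.trans ?_).symm
    simp only [map_add, map_singleton]
    abel
  · refine add_left_cancel (a := {FormM.box _}) (hΔ.trans ?_).symm
    simp only [map_add, map_singleton]
    abel

theorem Cancellable.of_not_imp {φ : FormM} (himp : ∀ α β, φ ≠ .imp α β)
    (hbox : ∀ ψ, φ = .box ψ → Cancellable ψ) : Cancellable φ := by
  intro Γ Δ h
  generalize hs : (Γ + {φ}, {φ} + Δ) = s at h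
  induction h generalizing Γ Δ with
  | id =>
    obtain ⟨hΓ, hΔ⟩ := Prod.mk.inj hs
    exact (id Γ).of_eq rfl (add_right_cancel (hΓ.trans (hΔ.symm.trans (add_comm ..))))
  | @impL Γ' _ α β _ ih =>
    obtain ⟨hΓ, rfl⟩ := Prod.mk.inj hs
    rw [add_comm Γ, add_comm Γ'] at hΓ
    rcases singleton_add_eq_singleton_add.mp hΓ with ⟨he, -⟩ | ⟨-, u, rfl, rfl⟩
    · exact absurd he (himp α β)
    · exact (impL (ih (Γ := u + {β}) (Δ := {α} + Δ)
        (by rw [add_comm {φ} u, add_right_comm, add_left_comm]))).of_eq (add_comm ..) rfl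
  | @impR _ _ α β _ ih =>
    obtain ⟨rfl, hΔ⟩ := Prod.mk.inj hs
    rcases singleton_add_eq_singleton_add.mp hΔ with ⟨he, -⟩ | ⟨-, u, rfl, rfl⟩
    · exact absurd he (himp α β)
    · exact impR (ih (Γ := Γ + {α}) (Δ := {β} + u) (by rw [add_right_comm, add_left_comm]))
  | box k hk Γ₀ S hsplit h0 hS =>
    obtain ⟨hΓ, hΔ⟩ := Prod.mk.inj hs
    exact of_box_rule hbox hk hsplit h0 hS hΓ hΔ

theorem cancellable : ∀ φ : FormM, Cancellable φ
  | .var _ => .of_not_imp (fun _ _ => FormM.noConfusion) (fun _ => FormM.noConfusion)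
  | .imp α β => (cancellable α).imp (cancellable β)
  | .box ψ =>
    .of_not_imp (fun _ _ => FormM.noConfusion) (fun _ h => by cases h; exact cancellable ψ)

end GKAmR'

/-- The cancellation rule is GK(A_m)^r-admissible: if
Γ, φ ⇒ φ, Δ is GK(A_m)^r-derivable, then Γ ⇒ Δ is GK(A_m)^r-derivable. -/
theorem stmt_11 (φ : FormM) (Γ Δ : Multiset FormM)
    (h : GKAmR (Γ + {φ}, {φ} + Δ)) : GKAmR (Γ, Δ) :=
  (GKAmR'.cancellable φ (GKAmR'.of_gkamR h)).to_gkamR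
end
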